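/- arXiv:2402.17462 — 2 statements merged into one kernel-verified Lean document; each statement's English description precedes it below -/
import Mathlib

section
/- Let 𝒫 be a nonempty set of probability measures and X, Y random variables with uniformly bounded second moments over 𝒫. Define M_X = [inf_P E_P[X], sup_P E_P[X]] and M_Y similarly, and Ē[Z] = sup_{P∈𝒫} E_P[Z]. Then the upper covariance C̄(X,Y) := max over μ₂ ∈ M_Y of min over μ₁ ∈ M_X of Ē[(X-μ₁)(Y-μ₂)] equals sup over P in the convex hull of 𝒫 of Cov_P(X,Y). -/
open MeasureTheory ENNReal

variable {Ω : Type*} [MeasurableSpace Ω]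

/-- Classical covariance of `X` and `Y` under `P`. -/
noncomputable def covP (P : Measure Ω) (X Y : Ω → ℝ) : ℝ :=
  (∫ ω, X ω * Y ω ∂P) - (∫ ω, X ω ∂P) * (∫ ω, Y ω ∂P)

/-- Classical variance of `X` under `P`. -/
noncomputable def varP (P : Measure Ω) (X : Ω → ℝ) : ℝ :=
  (∫ ω, (X ω) ^ 2 ∂P) - (∫ ω, X ω ∂P) ^ 2

/-- The convex hull of a set of measures: all finite convex combinations. -/
def convHullP (S : Set (Measure Ω)) : Set (Measure Ω) :=
  { Q | ∃ (n : ℕ) (w : Fin n → ℝ≥0∞) (P : Fin n → Measure Ω),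
      (∑ i, w i = 1) ∧ (∀ i, P i ∈ S) ∧ Q = ∑ i, w i • P i }

/-!
All quantities in the theorem are functions of the moment vector `m(P) = (E_P[XY], E_P[X], E_P[Y])`:
`E_P[(X - μ₁)(Y - μ₂)]` is affine in `m(P)`, and `Cov_P(X, Y) = m₁ - m₂ m₃`. Integrals are linear in
the measure, so the moment vectors of the convex hull of `𝒫` form the convex hull of the moment set
`V` of `𝒫`, and `V ⊆ ℝ³` is bounded by the second-moment bound.

For `v` in the convex hull of `V`, choosing `μ₂ = v₃` makes the mixed moment equal to `Cov(v)` for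
every `μ₁`. Conversely, for fixed `μ₂` the mixed moment is `α - μ₁ β` with `(α, β)` ranging over
a convex subset of the plane, and `μ₁ = v₂` turns it into `Cov(v)`. A one-dimensional minimax
argument (Sion's theorem on an interval, done by hand with thresholds) exchanges the choice of `μ₁`
with the supremum.
-/

open Set Bornology

theorem ENNReal.ne_top_of_sum_eq_one {ι : Type*} [Fintype ι] {w : ι → ℝ≥0∞}
    (hw : ∑ i, w i = 1) (i : ι) : w i ≠ ∞ :=
  ne_top_of_le_ne_top one_ne_top
    (hw ▸ Finset.single_le_sum (fun _ _ => zero_le) (Finset.mem_univ i))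

theorem Bornology.IsBounded.image_of_continuous {α β : Type*} [PseudoMetricSpace α]
    [ProperSpace α] [PseudoMetricSpace β] {s : Set α} (hs : IsBounded s) {f : α → β}
    (hf : Continuous f) : IsBounded (f '' s) :=
  (hs.isCompact_closure.image hf).isBounded.subset (image_mono subset_closure)

theorem mem_Icc_csInf_csSup_of_mem_convexHull {E : Type*} [AddCommGroup E] [Module ℝ E]
    {s : Set E} {f : E → ℝ} (hf : IsLinearMap ℝ f) (hs : IsBounded (f '' s)) {w : E}
    (hw : w ∈ convexHull ℝ s) : f w ∈ Icc (sInf (f '' s)) (sSup (f '' s)) :=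
  convexHull_min (t := f ⁻¹' Icc _ _) (fun _ hv => ⟨csInf_le hs.bddBelow (mem_image_of_mem f hv),
    le_csSup hs.bddAbove (mem_image_of_mem f hv)⟩) ((convex_Icc _ _).is_linear_preimage hf) hw

theorem exists_mem_Icc_forall_sub_mul_le {A : Set (ℝ × ℝ)} (hA : Convex ℝ A) {m M R : ℝ}
    (hmM : m ≤ M) (h : ∀ p ∈ A, ∃ μ ∈ Icc m M, p.1 - μ * p.2 ≤ R) :
    ∃ μ ∈ Icc m M, ∀ p ∈ A, p.1 - μ * p.2 ≤ R := by
  set t : ℝ × ℝ → ℝ := fun p => (p.1 - R) / p.2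
  have le_iff_of_pos : ∀ p : ℝ × ℝ, 0 < p.2 → ∀ μ, p.1 - μ * p.2 ≤ R ↔ t p ≤ μ := by
    intro p hp μ
    rw [div_le_iff₀ hp]
    constructor <;> intro <;> linarith
  have le_iff_of_neg : ∀ p : ℝ × ℝ, p.2 < 0 → ∀ μ, p.1 - μ * p.2 ≤ R ↔ μ ≤ t p := by
    intro p hp μ
    rw [le_div_iff_of_neg hp]
    constructor <;> intro <;> linarith
  -- Otherwise some `μ` is bad for both `p` and `q`, and then so is the point of the segment
  -- `[p, q]` on the axis `p.2 = 0`; but there `μ` plays no role, so `h` fails at that point.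
  have threshold_le : ∀ p ∈ A, ∀ q ∈ A, 0 < p.2 → q.2 < 0 → t p ≤ t q := by
    intro p hp q hq hp2 hq2
    by_contra! hlt
    obtain ⟨μ, hqμ, hμp⟩ := exists_between hlt
    have hpR : R < p.1 - μ * p.2 := not_le.1 fun h' => hμp.not_ge ((le_iff_of_pos p hp2 μ).1 h')
    have hqR : R < q.1 - μ * q.2 := not_le.1 fun h' => hqμ.not_ge ((le_iff_of_neg q hq2 μ).1 h')
    have hden : 0 < p.2 - q.2 := by linarith
    set a := -q.2 / (p.2 - q.2)
    set b := p.2 / (p.2 - q.2)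
    have ha : 0 < a := div_pos (by linarith) hden
    have hb : 0 ≤ b := div_nonneg hp2.le hden.le
    have hab : a + b = 1 := by rw [← add_div, div_eq_one_iff_eq hden.ne']; ring
    have hr2 : a * p.2 + b * q.2 = 0 := by field_simp; ring
    obtain ⟨ν, -, hν⟩ := h _ (hA hp hq ha.le hb hab)
    simp only [Prod.fst_add, Prod.snd_add, Prod.smul_fst, Prod.smul_snd, smul_eq_mul, hr2,
      mul_zero, sub_zero] at hν
    have hcomb : a * (p.1 - μ * p.2) + b * (q.1 - μ * q.2) = a * p.1 + b * q.1 := by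
      linear_combination (-μ) * hr2
    linarith [mul_lt_mul_of_pos_left hpR ha, mul_le_mul_of_nonneg_left hqR.le hb,
      show a * R + b * R = R by linear_combination R * hab]
  set T := t '' {p ∈ A | 0 < p.2}
  have hT : ∀ τ ∈ insert m T, τ ≤ M := by
    rintro _ (rfl | ⟨p, ⟨hp, hp2⟩, rfl⟩)
    · exact hmM
    · obtain ⟨μ, hμ, hμR⟩ := h p hp
      exact ((le_iff_of_pos p hp2 μ).1 hμR).trans hμ.2
  have hTbdd : BddAbove (insert m T) := ⟨M, hT⟩
  refine ⟨sSup (insert m T), ⟨le_csSup hTbdd (mem_insert m T),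
    csSup_le (insert_nonempty m T) hT⟩, fun p hp => ?_⟩
  rcases lt_trichotomy p.2 0 with hneg | hzero | hpos
  · refine (le_iff_of_neg p hneg _).2 (csSup_le (insert_nonempty m T) ?_)
    rintro _ (rfl | ⟨q, ⟨hq, hq2⟩, rfl⟩)
    · obtain ⟨μ, hμ, hμR⟩ := h p hp
      exact hμ.1.trans ((le_iff_of_neg p hneg μ).1 hμR)
    · exact threshold_le q hq p hp hq2 hneg
  · obtain ⟨μ, -, hμR⟩ := h p hp
    simpa [hzero] using hμR
  · exact (le_iff_of_pos p hpos _).2 (le_csSup hTbdd (mem_insert_of_mem m ⟨p, ⟨hp, hpos⟩, rfl⟩))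

section ConvHullP

variable {E : Type*} [NormedAddCommGroup E] {S : Set (Measure Ω)} {f : Ω → E}

theorem integrable_of_mem_convHullP (hf : ∀ P ∈ S, Integrable f P) {Q : Measure Ω}
    (hQ : Q ∈ convHullP S) : Integrable f Q := by
  obtain ⟨n, w, P, hw, hPS, rfl⟩ := hQ
  exact integrable_finsetSum_measure.2 fun i _ =>
    (hf _ (hPS i)).smul_measure (ENNReal.ne_top_of_sum_eq_one hw i)

variable [NormedSpace ℝ E]

theorem integral_sum_smul_measure {ι : Type*} [Fintype ι] {w : ι → ℝ≥0∞} (hw : ∀ i, w i ≠ ∞)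
    {P : ι → Measure Ω} (hf : ∀ i, Integrable f (P i)) :
    ∫ ω, f ω ∂(∑ i, w i • P i) = ∑ i, (w i).toReal • ∫ ω, f ω ∂(P i) := by
  rw [integral_finsetSum_measure fun i _ => (hf i).smul_measure (hw i)]
  simp only [integral_smul_measure]

theorem image_integral_convHullP [CompleteSpace E] (hf : ∀ P ∈ S, Integrable f P) :
    (fun Q => ∫ ω, f ω ∂Q) '' convHullP S = convexHull ℝ ((fun P => ∫ ω, f ω ∂P) '' S) := by
  apply Subset.antisymm
  · rintro _ ⟨Q, ⟨n, w, P, hw, hPS, rfl⟩, rfl⟩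
    have hw' := ENNReal.ne_top_of_sum_eq_one hw
    dsimp only
    rw [integral_sum_smul_measure hw' fun i => hf _ (hPS i)]
    refine (convex_convexHull ℝ _).sum_mem (fun i _ => toReal_nonneg) ?_
      fun i _ => subset_convexHull ℝ _ (mem_image_of_mem _ (hPS i))
    rw [← ENNReal.toReal_sum fun i _ => hw' i, hw, toReal_one]
  · intro x hx
    obtain ⟨ι, _, w, z, hw0, hw1, hz, rfl⟩ := mem_convexHull_iff_exists_fintype.1 hx
    choose P hPS hPz using hz
    let e := Fintype.equivFin ι
    refine ⟨∑ j, ENNReal.ofReal (w (e.symm j)) • P (e.symm j),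
      ⟨_, _, _, ?_, fun j => hPS _, rfl⟩, ?_⟩
    · rw [← ENNReal.ofReal_sum_of_nonneg fun j _ => hw0 _, e.symm.sum_comp w, hw1, ofReal_one]
    · dsimp only
      rw [integral_sum_smul_measure (fun _ => ofReal_ne_top) fun j => hf _ (hPS _)]
      simp only [toReal_ofReal (hw0 _), hPz]
      exact e.symm.sum_comp fun i => w i • z i

end ConvHullP

/-- `E[(X - c) (Y - d)]` in terms of the moment vector `v = (E[XY], E[X], E[Y])`. -/
def mixedMoment (c d : ℝ) (v : ℝ × ℝ × ℝ) : ℝ := v.1 - c * v.2.2 - d * v.2.1 + c * d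

def momentCov (v : ℝ × ℝ × ℝ) : ℝ := v.1 - v.2.1 * v.2.2

theorem mixedMoment_eq_momentCov_add (c d : ℝ) (v : ℝ × ℝ × ℝ) :
    mixedMoment c d v = momentCov v + (v.2.1 - c) * (v.2.2 - d) := by
  simp only [mixedMoment, momentCov]; ring

theorem mixedMoment_zero_sub_mul (c d : ℝ) (v : ℝ × ℝ × ℝ) :
    mixedMoment 0 d v - c * (v.2.2 - d) = mixedMoment c d v := by
  simp only [mixedMoment]; ring

theorem continuous_momentCov : Continuous momentCov := by
  unfold momentCov; fun_prop

theorem continuous_mixedMoment (c d : ℝ) : Continuous (mixedMoment c d) := by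
  unfold mixedMoment; fun_prop

theorem mixedMoment_add_smul {a b : ℝ} (hab : a + b = 1) (c d : ℝ) (u v : ℝ × ℝ × ℝ) :
    mixedMoment c d (a • u + b • v) = a * mixedMoment c d u + b * mixedMoment c d v := by
  simp only [mixedMoment, Prod.fst_add, Prod.snd_add, Prod.smul_fst, Prod.smul_snd, smul_eq_mul]
  linear_combination (-(c * d)) * hab

theorem convex_setOf_mixedMoment_le (c d r : ℝ) : Convex ℝ {v | mixedMoment c d v ≤ r} := by
  intro u hu v hv a b ha hb hab
  simp only [mem_ofPred_eq, mixedMoment_add_smul hab] at hu hv ⊢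
  linarith [mul_le_mul_of_nonneg_left hu ha, mul_le_mul_of_nonneg_left hv hb,
    show a * r + b * r = r by linear_combination r * hab]

theorem convex_image_mixedMoment_zero {W : Set (ℝ × ℝ × ℝ)} (hW : Convex ℝ W) (d : ℝ) :
    Convex ℝ ((fun v => (mixedMoment 0 d v, v.2.2 - d)) '' W) := by
  rintro _ ⟨u, hu, rfl⟩ _ ⟨v, hv, rfl⟩ a b ha hb hab
  refine ⟨a • u + b • v, hW hu hv ha hb hab, ?_⟩
  simp only [mixedMoment_add_smul hab, Prod.snd_add, Prod.smul_snd, smul_eq_mul, Prod.mk_add_mk,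
    Prod.smul_mk]
  congr 1
  linear_combination d * hab

section MomentSpace

variable {V : Set (ℝ × ℝ × ℝ)}

theorem mixedMoment_le_csSup_of_mem_convexHull (hV : IsBounded V) (c d : ℝ) {w : ℝ × ℝ × ℝ}
    (hw : w ∈ convexHull ℝ V) : mixedMoment c d w ≤ sSup (mixedMoment c d '' V) :=
  convexHull_min (fun _ hv =>
    le_csSup (hV.image_of_continuous (continuous_mixedMoment c d)).bddAbove (mem_image_of_mem _ hv))
    (convex_setOf_mixedMoment_le c d _) hw

theorem bddBelow_image_csSup_mixedMoment (hne : V.Nonempty) (hV : IsBounded V) (d a b : ℝ) :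
    BddBelow ((fun c => sSup (mixedMoment c d '' V)) '' Icc a b) := by
  obtain ⟨v, hv⟩ := hne
  obtain ⟨r, hr⟩ := isCompact_Icc.bddBelow_image
    (f := fun c => mixedMoment c d v) (by unfold mixedMoment; fun_prop)
  refine ⟨r, ?_⟩
  rintro _ ⟨c, hc, rfl⟩
  exact (hr (mem_image_of_mem _ hc)).trans <|
    le_csSup (hV.image_of_continuous (continuous_mixedMoment c d)).bddAbove (mem_image_of_mem _ hv)

theorem csInf_csSup_mixedMoment_le_csSup_momentCov (hne : V.Nonempty) (hV : IsBounded V) (d : ℝ) :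
    sInf ((fun c => sSup (mixedMoment c d '' V)) ''
        Icc (sInf ((fun v => v.2.1) '' V)) (sSup ((fun v => v.2.1) '' V))) ≤
      sSup (momentCov '' convexHull ℝ V) := by
  have hW : IsBounded (convexHull ℝ V) := isBounded_convexHull.2 hV
  have hx : IsBounded ((fun v : ℝ × ℝ × ℝ => v.2.1) '' V) := hV.image_of_continuous (by fun_prop)
  have hcov : ∀ p ∈ (fun v => (mixedMoment 0 d v, v.2.2 - d)) '' convexHull ℝ V,
      ∃ c ∈ Icc (sInf ((fun v => v.2.1) '' V)) (sSup ((fun v => v.2.1) '' V)),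
        p.1 - c * p.2 ≤ sSup (momentCov '' convexHull ℝ V) := by
    rintro _ ⟨w, hw, rfl⟩
    refine ⟨w.2.1, mem_Icc_csInf_csSup_of_mem_convexHull ⟨fun _ _ => rfl, fun _ _ => rfl⟩ hx hw, ?_⟩
    rw [mixedMoment_zero_sub_mul, mixedMoment_eq_momentCov_add, sub_self, zero_mul, add_zero]
    exact le_csSup (hW.image_of_continuous continuous_momentCov).bddAbove (mem_image_of_mem _ hw)
  obtain ⟨c, hc, hcR⟩ := exists_mem_Icc_forall_sub_mul_le
    (convex_image_mixedMoment_zero (convex_convexHull ℝ V) d)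
    (Real.sInf_le_sSup _ hx.bddBelow hx.bddAbove) hcov
  refine (csInf_le (bddBelow_image_csSup_mixedMoment hne hV d _ _) (mem_image_of_mem _ hc)).trans
    (csSup_le (hne.image _) ?_)
  rintro _ ⟨v, hv, rfl⟩
  simpa only [mixedMoment_zero_sub_mul] using
    hcR _ (mem_image_of_mem _ (subset_convexHull ℝ V hv))

theorem momentCov_le_csInf_csSup_mixedMoment (hV : IsBounded V) {w : ℝ × ℝ × ℝ}
    (hw : w ∈ convexHull ℝ V) {a b : ℝ} (hab : a ≤ b) :
    momentCov w ≤ sInf ((fun c => sSup (mixedMoment c w.2.2 '' V)) '' Icc a b) := by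
  refine le_csInf ((nonempty_Icc.2 hab).image _) ?_
  rintro _ ⟨c, -, rfl⟩
  have := mixedMoment_le_csSup_of_mem_convexHull hV c w.2.2 hw
  rwa [mixedMoment_eq_momentCov_add, sub_self, mul_zero, add_zero] at this

theorem csSup_csInf_csSup_mixedMoment_eq (hne : V.Nonempty) (hV : IsBounded V) :
    sSup ((fun d => sInf ((fun c => sSup (mixedMoment c d '' V)) ''
        Icc (sInf ((fun v => v.2.1) '' V)) (sSup ((fun v => v.2.1) '' V)))) ''
        Icc (sInf ((fun v => v.2.2) '' V)) (sSup ((fun v => v.2.2) '' V))) =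
      sSup (momentCov '' convexHull ℝ V) := by
  have hx : IsBounded ((fun v : ℝ × ℝ × ℝ => v.2.1) '' V) := hV.image_of_continuous (by fun_prop)
  have hy : IsBounded ((fun v : ℝ × ℝ × ℝ => v.2.2) '' V) := hV.image_of_continuous (by fun_prop)
  have hupper := csInf_csSup_mixedMoment_le_csSup_momentCov hne hV
  refine le_antisymm ?_ (csSup_le ((hne.mono (subset_convexHull ℝ V)).image _) ?_)
  · refine csSup_le ((nonempty_Icc.2 (Real.sInf_le_sSup _ hy.bddBelow hy.bddAbove)).image _) ?_
    rintro _ ⟨d, -, rfl⟩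
    exact hupper d
  · rintro _ ⟨w, hw, rfl⟩
    refine (momentCov_le_csInf_csSup_mixedMoment hV hw
      (Real.sInf_le_sSup _ hx.bddBelow hx.bddAbove)).trans (le_csSup ?_ ?_)
    · exact ⟨_, by rintro _ ⟨d, -, rfl⟩; exact hupper d⟩
    · exact mem_image_of_mem _
        (mem_Icc_csInf_csSup_of_mem_convexHull ⟨fun _ _ => rfl, fun _ _ => rfl⟩ hy hw)

end MomentSpace

section Moments

variable {P : Measure Ω} {X Y : Ω → ℝ}

noncomputable def moments (X Y : Ω → ℝ) (P : Measure Ω) : ℝ × ℝ × ℝ :=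
  ∫ ω, (X ω * Y ω, X ω, Y ω) ∂P

theorem moments_eq (hXY : Integrable (fun ω => X ω * Y ω) P) (hX : Integrable X P)
    (hY : Integrable Y P) : moments X Y P = (∫ ω, X ω * Y ω ∂P, ∫ ω, X ω ∂P, ∫ ω, Y ω ∂P) := by
  rw [moments, integral_pair hXY (hX.prodMk hY), integral_pair hX hY]

theorem integral_sub_mul_sub_eq_mixedMoment [IsProbabilityMeasure P]
    (hXY : Integrable (fun ω => X ω * Y ω) P) (hX : Integrable X P) (hY : Integrable Y P)
    (c d : ℝ) : ∫ ω, (X ω - c) * (Y ω - d) ∂P = mixedMoment c d (moments X Y P) := by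
  have h₁ : Integrable (fun ω => X ω * Y ω - c * Y ω) P := hXY.sub (hY.const_mul c)
  have h₂ : Integrable (fun ω => X ω * Y ω - c * Y ω - d * X ω) P := h₁.sub (hX.const_mul d)
  calc ∫ ω, (X ω - c) * (Y ω - d) ∂P = ∫ ω, X ω * Y ω - c * Y ω - d * X ω + c * d ∂P := by
        congr 1; ext ω; ring
    _ = mixedMoment c d (moments X Y P) := by
      rw [integral_add h₂ (integrable_const _), integral_sub h₁ (hX.const_mul d),
        integral_sub hXY (hY.const_mul c), integral_const_mul, integral_const_mul, integral_const,
        moments_eq hXY hX hY]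
      simp [mixedMoment]

theorem norm_moments_le [IsProbabilityMeasure P] (hX : MemLp X 2 P) (hY : MemLp Y 2 P) :
    ‖moments X Y P‖ ≤ 1 + ∫ ω, X ω ^ 2 ∂P + ∫ ω, Y ω ^ 2 ∂P := by
  have h₁ : Integrable (fun ω => 1 + X ω ^ 2) P := (integrable_const 1).add hX.integrable_sq
  have hint : Integrable (fun ω => 1 + X ω ^ 2 + Y ω ^ 2) P := h₁.add hY.integrable_sq
  refine (norm_integral_le_of_norm_le hint (Filter.Eventually.of_forall fun ω => ?_)).trans_eq ?_
  · simp only [Prod.norm_def, Real.norm_eq_abs, abs_mul]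
    refine max_le ?_ (max_le ?_ ?_) <;>
      nlinarith [sq_abs (X ω), sq_abs (Y ω), sq_nonneg (|X ω| - |Y ω|), sq_nonneg (|X ω| - 1),
        sq_nonneg (|Y ω| - 1), sq_nonneg (X ω), sq_nonneg (Y ω)]
  · rw [integral_add h₁ hY.integrable_sq, integral_add (integrable_const 1) hX.integrable_sq]
    simp

variable {S : Set (Measure Ω)}

theorem isBounded_image_moments (hprob : ∀ P ∈ S, IsProbabilityMeasure P)
    (hXY : ∀ P ∈ S, MemLp X 2 P ∧ MemLp Y 2 P)
    (hbdd : BddAbove ((fun P => ∫ ω, X ω ^ 2 ∂P + ∫ ω, Y ω ^ 2 ∂P) '' S)) :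
    IsBounded (moments X Y '' S) := by
  obtain ⟨C, hC⟩ := hbdd
  refine isBounded_iff_forall_norm_le.2 ⟨1 + C, ?_⟩
  rintro _ ⟨P, hP, rfl⟩
  have := hprob P hP
  linarith [norm_moments_le (hXY P hP).1 (hXY P hP).2, hC (mem_image_of_mem _ hP)]

theorem image_covP_convHullP (hXY : ∀ P ∈ S, Integrable (fun ω => X ω * Y ω) P)
    (hX : ∀ P ∈ S, Integrable X P) (hY : ∀ P ∈ S, Integrable Y P) :
    (fun Q => covP Q X Y) '' convHullP S = momentCov '' convexHull ℝ (moments X Y '' S) := by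
  have hhull : moments X Y '' convHullP S = convexHull ℝ (moments X Y '' S) :=
    image_integral_convHullP fun P hP => (hXY P hP).prodMk ((hX P hP).prodMk (hY P hP))
  rw [← hhull, image_image]
  refine image_congr fun Q hQ => ?_
  rw [moments_eq (integrable_of_mem_convHullP hXY hQ) (integrable_of_mem_convHullP hX hQ)
    (integrable_of_mem_convHullP hY hQ)]
  rfl

end Moments

theorem stmt5 (S : Set (Measure Ω)) (hS : S.Nonempty)
    (hprob : ∀ P ∈ S, IsProbabilityMeasure P) (X Y : Ω → ℝ)
    (hXY : ∀ P ∈ S, MemLp X 2 P ∧ MemLp Y 2 P)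
    (hbdd : BddAbove ((fun P => (∫ ω, (X ω) ^ 2 ∂P) + ∫ ω, (Y ω) ^ 2 ∂P) '' S)) :
    sSup ((fun μ₂ => sInf ((fun μ₁ =>
        sSup ((fun P => ∫ ω, (X ω - μ₁) * (Y ω - μ₂) ∂P) '' S)) ''
          Set.Icc (sInf ((fun P => ∫ ω, X ω ∂P) '' S))
                  (sSup ((fun P => ∫ ω, X ω ∂P) '' S)))) ''
        Set.Icc (sInf ((fun P => ∫ ω, Y ω ∂P) '' S))
                (sSup ((fun P => ∫ ω, Y ω ∂P) '' S))) =
      sSup ((fun P => covP P X Y) '' convHullP S) := by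
  have hint (P) (hP : P ∈ S) :
      Integrable (fun ω => X ω * Y ω) P ∧ Integrable X P ∧ Integrable Y P :=
    have := hprob P hP
    ⟨(hXY P hP).1.integrable_mul (hXY P hP).2, (hXY P hP).1.integrable one_le_two,
      (hXY P hP).2.integrable one_le_two⟩
  choose hXYi hXi hYi using hint
  have hmix (c d : ℝ) : (fun P => ∫ ω, (X ω - c) * (Y ω - d) ∂P) '' S =
      mixedMoment c d '' (moments X Y '' S) := by
    rw [image_image]
    refine image_congr fun P hP => ?_
    have := hprob P hP
    exact integral_sub_mul_sub_eq_mixedMoment (hXYi P hP) (hXi P hP) (hYi P hP) c d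
  have hmoments (P) (hP : P ∈ S) :
      moments X Y P = (∫ ω, X ω * Y ω ∂P, ∫ ω, X ω ∂P, ∫ ω, Y ω ∂P) :=
    moments_eq (hXYi P hP) (hXi P hP) (hYi P hP)
  have hmeanX : (fun P => ∫ ω, X ω ∂P) '' S = (fun v => v.2.1) '' (moments X Y '' S) := by
    rw [image_image]
    exact image_congr fun P hP => by rw [hmoments P hP]
  have hmeanY : (fun P => ∫ ω, Y ω ∂P) '' S = (fun v => v.2.2) '' (moments X Y '' S) := by
    rw [image_image]
    exact image_congr fun P hP => by rw [hmoments P hP]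
  simp only [hmix, hmeanX, hmeanY, image_covP_convHullP hXYi hXi hYi]
  exact csSup_csInf_csSup_mixedMoment_eq (hS.image _) (isBounded_image_moments hprob hXY hbdd)
end

section
/- Let 𝒫 be a nonempty set of probability measures and X, Y random variables with uniformly bounded second moments and means over 𝒫. Then with Ē[Z] = sup_{P∈𝒫} E_P[Z], the upper covariance C̄(X,Y) = sup_{P∈conv(𝒫)} Cov_P(X,Y) admits the unrestricted maximin representation C̄(X,Y) = sup over μ₂ ∈ ℝ of inf over μ₁ ∈ ℝ of Ē[(X−μ₁)(Y−μ₂)]. -/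
open MeasureTheory ENNReal

variable {Ω : Type*} [MeasurableSpace Ω]

/-!
Under a probability measure `P`,
`E_P[(X - μ₁)(Y - μ₂)] = Cov_P(X, Y) + (E_P X - μ₁)(E_P Y - μ₂)`.
For `Q` in the convex hull, choosing `μ₂ = E_Q Y` kills the second term, and the left side,
being affine in `Q`, is at most `Ē[(X - μ₁)(Y - μ₂)]`; this gives `≤`.

Conversely fix `μ₂` and a bound `c` for the covariances on the hull. As a function of `μ₁`,
each `E_P[(X - μ₁)(Y - μ₂)]` is affine with slope `μ₂ - E_P Y`, so `{μ₁ | E_P[…] ≤ c}` is a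
half-line, containing the bounded point `E_P X`. Two half-lines pointing in opposite directions
meet, because the mixture of their measures with `E Y = μ₂` has covariance at most `c`; on the
line this forces a common point of all of them.
-/

theorem subset_convHullP (S : Set (Measure Ω)) : S ⊆ convHullP S := fun P hP =>
  ⟨1, fun _ => 1, fun _ => P, by simp, fun _ => hP, by simp⟩

namespace convHullP

variable {S : Set (Measure Ω)} {Q : Measure Ω}

theorem smul_add_smul_mem {P P' : Measure Ω} (hP : P ∈ S) (hP' : P' ∈ S) {t : ℝ}
    (ht : t ∈ Set.Icc (0 : ℝ) 1) :
    ENNReal.ofReal (1 - t) • P + ENNReal.ofReal t • P' ∈ convHullP S := by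
  refine ⟨2, ![ENNReal.ofReal (1 - t), ENNReal.ofReal t], ![P, P'], ?_, ?_, by simp⟩
  · rw [Fin.sum_univ_two]
    simp [← ENNReal.ofReal_add (sub_nonneg.2 ht.2) ht.1]
  · simp [Fin.forall_fin_two, hP, hP']

theorem isProbabilityMeasure (hprob : ∀ P ∈ S, IsProbabilityMeasure P) (hQ : Q ∈ convHullP S) :
    IsProbabilityMeasure Q := by
  obtain ⟨n, w, P, hw, hPS, rfl⟩ := hQ
  constructor
  simp [Measure.finsetSum_apply, fun i => (hprob _ (hPS i)).measure_univ, hw]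

theorem integrable {f : Ω → ℝ} (hf : ∀ P ∈ S, Integrable f P) (hQ : Q ∈ convHullP S) :
    Integrable f Q := by
  obtain ⟨n, w, P, hw, hPS, rfl⟩ := hQ
  have hw' : ∀ i, w i ≠ ∞ := fun i =>
    (lt_top_of_sum_ne_top (hw ▸ one_ne_top) (Finset.mem_univ i)).ne
  exact integrable_finsetSum_measure.2 fun i _ => (hf _ (hPS i)).smul_measure (hw' i)

theorem integral_le {f : Ω → ℝ} {M : ℝ} (hf : ∀ P ∈ S, Integrable f P)
    (hM : ∀ P ∈ S, ∫ ω, f ω ∂P ≤ M) (hQ : Q ∈ convHullP S) : ∫ ω, f ω ∂Q ≤ M := by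
  obtain ⟨n, w, P, hw, hPS, rfl⟩ := hQ
  have hw' : ∀ i, w i ≠ ∞ := fun i =>
    (lt_top_of_sum_ne_top (hw ▸ one_ne_top) (Finset.mem_univ i)).ne
  rw [integral_finsetSum_measure fun i _ => (hf _ (hPS i)).smul_measure (hw' i)]
  calc ∑ i, ∫ ω, f ω ∂(w i • P i) = ∑ i, (w i).toReal * ∫ ω, f ω ∂(P i) := by
        simp [integral_smul_measure]
    _ ≤ ∑ i, (w i).toReal * M :=
        Finset.sum_le_sum fun i _ => mul_le_mul_of_nonneg_left (hM _ (hPS i)) toReal_nonneg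
    _ = M := by
        rw [← Finset.sum_mul, ← ENNReal.toReal_sum fun i _ => hw' i, hw, toReal_one, one_mul]

end convHullP

theorem integral_smul_add_smul {P P' : Measure Ω} {f : Ω → ℝ} (hf : Integrable f P)
    (hf' : Integrable f P') {t : ℝ} (ht : t ∈ Set.Icc (0 : ℝ) 1) :
    ∫ ω, f ω ∂(ENNReal.ofReal (1 - t) • P + ENNReal.ofReal t • P') =
      (1 - t) * ∫ ω, f ω ∂P + t * ∫ ω, f ω ∂P' := by
  rw [integral_add_measure (hf.smul_measure ofReal_ne_top) (hf'.smul_measure ofReal_ne_top),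
    integral_smul_measure, integral_smul_measure, toReal_ofReal (sub_nonneg.2 ht.2),
    toReal_ofReal ht.1, smul_eq_mul, smul_eq_mul]

theorem integral_sub_mul_sub {P : Measure Ω} [IsProbabilityMeasure P] {X Y : Ω → ℝ}
    (hX : Integrable X P) (hY : Integrable Y P) (hXY : Integrable (fun ω => X ω * Y ω) P)
    (a b : ℝ) :
    ∫ ω, (X ω - a) * (Y ω - b) ∂P = covP P X Y + (∫ ω, X ω ∂P - a) * (∫ ω, Y ω ∂P - b) := by
  have hexp : (fun ω => (X ω - a) * (Y ω - b)) =
      fun ω => (X ω * Y ω - b * X ω) - (a * Y ω - a * b) := by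
    funext ω; ring
  rw [hexp, integral_sub, integral_sub hXY (hX.const_mul b),
    integral_sub (hY.const_mul a) (integrable_const _), integral_const_mul, integral_const_mul,
    integral_const, covP]
  · simp
    ring
  · exact hXY.sub (hX.const_mul b)
  · exact (hY.const_mul a).sub (integrable_const _)

theorem abs_integral_mul_le {P : Measure Ω} {f g : Ω → ℝ} (hf : MemLp f 2 P) (hg : MemLp g 2 P) :
    |∫ ω, f ω * g ω ∂P| ≤ (∫ ω, f ω ^ 2 ∂P + ∫ ω, g ω ^ 2 ∂P) / 2 := by
  rw [← integral_add hf.integrable_sq hg.integrable_sq, ← integral_div, ← Real.norm_eq_abs]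
  refine norm_integral_le_of_norm_le ((hf.integrable_sq.add hg.integrable_sq).div_const 2)
    (Filter.Eventually.of_forall fun ω => ?_)
  rw [Real.norm_eq_abs, abs_mul]
  nlinarith [two_mul_le_add_sq |f ω| |g ω|, sq_abs (f ω), sq_abs (g ω)]

/-- The constraints with `d i < 0` are lower bounds `(C - u i) / d i ≤ a`, the others upper bounds;
`hmix`, applied to the mixture of slope zero, puts every lower bound below every upper bound. -/
theorem exists_forall_add_mul_le {ι : Type*} {s : Set ι} {u d x : ι → ℝ} {B C : ℝ}
    (hxB : ∀ i ∈ s, |x i| ≤ B) (hx : ∀ i ∈ s, u i + x i * d i ≤ C)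
    (hmix : ∀ i ∈ s, ∀ j ∈ s, ∀ t ∈ Set.Icc (0 : ℝ) 1,
      (1 - t) * d i + t * d j = 0 → (1 - t) * u i + t * u j ≤ C) :
    ∃ a, ∀ i ∈ s, u i + a * d i ≤ C := by
  set A := insert (-B) ((fun j => (C - u j) / d j) '' {j | j ∈ s ∧ d j < 0})
  have hA : BddAbove A := by
    refine bddAbove_insert.2 ⟨B, ?_⟩
    rintro _ ⟨j, ⟨hj, hdj⟩, rfl⟩
    rw [div_le_iff_of_neg hdj]
    nlinarith [hx j hj, (abs_le.1 (hxB j hj)).2]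
  refine ⟨sSup A, fun i hi => ?_⟩
  rcases lt_trichotomy (d i) 0 with hdi | hdi | hdi
  · have := le_csSup hA (Set.mem_insert_of_mem _ ⟨i, ⟨hi, hdi⟩, rfl⟩)
    rw [div_le_iff_of_neg hdi] at this
    linarith
  · simpa [hdi] using hx i hi
  · suffices sSup A ≤ (C - u i) / d i by rwa [le_div_iff₀ hdi, le_sub_iff_add_le'] at this
    refine csSup_le (Set.insert_nonempty _ _) ?_
    rintro _ (rfl | ⟨j, ⟨hj, hdj⟩, rfl⟩)
    · rw [le_div_iff₀ hdi]
      nlinarith [hx i hi, (abs_le.1 (hxB i hi)).1]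
    · have hden : 0 < d i - d j := by linarith
      have key := hmix i hi j hj (d i / (d i - d j))
        ⟨by positivity, (div_le_one hden).2 (by linarith)⟩ (by field_simp; ring)
      have h1 : 1 - d i / (d i - d j) = -d j / (d i - d j) := by field_simp; ring
      rw [h1, div_mul_eq_mul_div, div_mul_eq_mul_div, ← add_div, div_le_iff₀ hden] at key
      rw [div_le_iff_of_neg hdj, div_mul_eq_mul_div, div_le_iff₀ hdi]
      linarith

theorem abs_integral_le_of_integral_sq_add_le {P : Measure Ω} [IsProbabilityMeasure P]
    {X Y : Ω → ℝ} (hX : MemLp X 2 P) (hY : MemLp Y 2 P) {M : ℝ}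
    (hM : ∫ ω, X ω ^ 2 ∂P + ∫ ω, Y ω ^ 2 ∂P ≤ M) :
    |∫ ω, X ω ∂P| ≤ (M + 1) / 2 ∧ |∫ ω, Y ω ∂P| ≤ (M + 1) / 2 ∧
      |∫ ω, X ω * Y ω ∂P| ≤ (M + 1) / 2 := by
  have hX2 : 0 ≤ ∫ ω, X ω ^ 2 ∂P := integral_nonneg fun ω => sq_nonneg _
  have hY2 : 0 ≤ ∫ ω, Y ω ^ 2 ∂P := integral_nonneg fun ω => sq_nonneg _
  have hX1 := abs_integral_mul_le hX (memLp_const (1 : ℝ))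
  have hY1 := abs_integral_mul_le hY (memLp_const (1 : ℝ))
  have hXY := abs_integral_mul_le hX hY
  simp only [mul_one, one_pow, integral_const, probReal_univ, smul_eq_mul] at hX1 hY1
  exact ⟨by linarith, by linarith, by linarith⟩

section UpperCovariance

variable {S : Set (Measure Ω)} {X Y : Ω → ℝ}

theorem integrable_moments (hprob : ∀ P ∈ S, IsProbabilityMeasure P)
    (hXY : ∀ P ∈ S, MemLp X 2 P ∧ MemLp Y 2 P) {P : Measure Ω} (hP : P ∈ S) :
    Integrable X P ∧ Integrable Y P ∧ Integrable (fun ω => X ω * Y ω) P :=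
  have := hprob P hP
  ⟨(hXY P hP).1.integrable one_le_two, (hXY P hP).2.integrable one_le_two,
    (hXY P hP).1.integrable_mul (hXY P hP).2⟩

theorem bddAbove_integral_sub_mul_sub (hprob : ∀ P ∈ S, IsProbabilityMeasure P)
    (hXY : ∀ P ∈ S, MemLp X 2 P ∧ MemLp Y 2 P) {B : ℝ}
    (hB : ∀ P ∈ S, |∫ ω, X ω ∂P| ≤ B ∧ |∫ ω, Y ω ∂P| ≤ B ∧ |∫ ω, X ω * Y ω ∂P| ≤ B)
    (a b : ℝ) : BddAbove ((fun P => ∫ ω, (X ω - a) * (Y ω - b) ∂P) '' S) := by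
  refine ⟨B + |a| * B + |b| * B + |a * b|, ?_⟩
  rintro _ ⟨P, hP, rfl⟩
  have := hprob P hP
  obtain ⟨hX, hY, hXY'⟩ := integrable_moments hprob hXY hP
  obtain ⟨hx, hy, hz⟩ := hB P hP
  have hay : -(a * ∫ ω, Y ω ∂P) ≤ |a| * B :=
    (neg_le_abs _).trans (abs_mul a _ ▸ mul_le_mul_of_nonneg_left hy (abs_nonneg a))
  have hbx : -(b * ∫ ω, X ω ∂P) ≤ |b| * B :=
    (neg_le_abs _).trans (abs_mul b _ ▸ mul_le_mul_of_nonneg_left hx (abs_nonneg b))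
  dsimp only
  rw [integral_sub_mul_sub hX hY hXY', covP]
  linarith [le_abs_self (∫ ω, X ω * Y ω ∂P), le_abs_self (a * b)]

theorem covP_le_sSup_integral_sub_mul_sub (hprob : ∀ P ∈ S, IsProbabilityMeasure P)
    (hXY : ∀ P ∈ S, MemLp X 2 P ∧ MemLp Y 2 P) {Q : Measure Ω} (hQ : Q ∈ convHullP S) (a : ℝ)
    (hbdd : BddAbove ((fun P => ∫ ω, (X ω - a) * (Y ω - ∫ ω, Y ω ∂Q) ∂P) '' S)) :
    covP Q X Y ≤ sSup ((fun P => ∫ ω, (X ω - a) * (Y ω - ∫ ω, Y ω ∂Q) ∂P) '' S) := by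
  have := convHullP.isProbabilityMeasure hprob hQ
  have hint := fun P hP => integrable_moments hprob hXY (P := P) hP
  calc covP Q X Y = ∫ ω, (X ω - a) * (Y ω - ∫ ω, Y ω ∂Q) ∂Q := by
        rw [integral_sub_mul_sub (convHullP.integrable (fun P hP => (hint P hP).1) hQ)
          (convHullP.integrable (fun P hP => (hint P hP).2.1) hQ)
          (convHullP.integrable (fun P hP => (hint P hP).2.2) hQ), sub_self, mul_zero, add_zero]
    _ ≤ _ := by
        refine convHullP.integral_le (fun P hP => ?_) (fun P hP => le_csSup hbdd ⟨P, hP, rfl⟩) hQ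
        have := hprob P hP
        exact ((hXY P hP).1.sub (memLp_const a)).integrable_mul ((hXY P hP).2.sub (memLp_const _))

theorem exists_forall_integral_sub_mul_sub_le (hprob : ∀ P ∈ S, IsProbabilityMeasure P)
    (hXY : ∀ P ∈ S, MemLp X 2 P ∧ MemLp Y 2 P) {B : ℝ} (hB : ∀ P ∈ S, |∫ ω, X ω ∂P| ≤ B)
    {c : ℝ} (hc : ∀ Q ∈ convHullP S, covP Q X Y ≤ c) (μ₂ : ℝ) :
    ∃ μ₁, ∀ P ∈ S, ∫ ω, (X ω - μ₁) * (Y ω - μ₂) ∂P ≤ c := by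
  have hint := fun P hP => integrable_moments hprob hXY (P := P) hP
  obtain ⟨a, ha⟩ := exists_forall_add_mul_le (s := S) (C := c)
    (u := fun P => ∫ ω, X ω * Y ω ∂P - μ₂ * ∫ ω, X ω ∂P) (d := fun P => μ₂ - ∫ ω, Y ω ∂P) hB
    (fun P hP => by
      have hcov := hc P (subset_convHullP S hP)
      rw [covP] at hcov
      linear_combination hcov)
    (fun P hP P' hP' t ht hzero => by
      have hmix := hc _ (convHullP.smul_add_smul_mem hP hP' ht)
      obtain ⟨hX, hY, hXY⟩ := hint P hP
      obtain ⟨hX', hY', hXY'⟩ := hint P' hP'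
      rw [covP, integral_smul_add_smul hXY hXY' ht, integral_smul_add_smul hX hX' ht,
        integral_smul_add_smul hY hY' ht] at hmix
      linear_combination hmix - ((1 - t) * ∫ ω, X ω ∂P + t * ∫ ω, X ω ∂P') * hzero)
  refine ⟨a, fun P hP => ?_⟩
  have := hprob P hP
  obtain ⟨hX, hY, hXY⟩ := hint P hP
  rw [integral_sub_mul_sub hX hY hXY, covP]
  linear_combination ha P hP

end UpperCovariance

theorem stmt16 (S : Set (Measure Ω)) (hS : S.Nonempty)
    (hprob : ∀ P ∈ S, IsProbabilityMeasure P) (X Y : Ω → ℝ)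
    (hXY : ∀ P ∈ S, MemLp X 2 P ∧ MemLp Y 2 P)
    (hbdd : BddAbove ((fun P => (∫ ω, (X ω) ^ 2 ∂P) + ∫ ω, (Y ω) ^ 2 ∂P) '' S)) :
    ((sSup ((fun P => covP P X Y) '' convHullP S) : EReal)) =
      ⨆ μ₂ : ℝ, ⨅ μ₁ : ℝ,
        ((sSup ((fun P => ∫ ω, (X ω - μ₁) * (Y ω - μ₂) ∂P) '' S) : ℝ) : EReal) := by
  obtain ⟨M, hM⟩ := hbdd
  have hB : ∀ P ∈ S, |∫ ω, X ω ∂P| ≤ (M + 1) / 2 ∧ |∫ ω, Y ω ∂P| ≤ (M + 1) / 2 ∧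
      |∫ ω, X ω * Y ω ∂P| ≤ (M + 1) / 2 := fun P hP =>
    have := hprob P hP
    abs_integral_le_of_integral_sq_add_le (hXY P hP).1 (hXY P hP).2 (hM ⟨P, hP, rfl⟩)
  apply le_antisymm
  · refine sSup_le ?_
    rintro _ ⟨Q, hQ, rfl⟩
    refine le_iSup_of_le (∫ ω, Y ω ∂Q) (le_iInf fun a => EReal.coe_le_coe_iff.2 ?_)
    exact covP_le_sSup_integral_sub_mul_sub hprob hXY hQ a
      (bddAbove_integral_sub_mul_sub hprob hXY hB _ _)
  · refine iSup_le fun μ₂ => EReal.le_of_forall_lt_iff_le.1 fun c hc => ?_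
    have hcov : ∀ Q ∈ convHullP S, covP Q X Y ≤ c := fun Q hQ =>
      EReal.coe_le_coe_iff.1
        ((le_sSup (Set.mem_image_of_mem (fun P => (covP P X Y : EReal)) hQ)).trans hc.le)
    obtain ⟨a, ha⟩ :=
      exists_forall_integral_sub_mul_sub_le hprob hXY (fun P hP => (hB P hP).1) hcov μ₂
    refine (iInf_le _ a).trans (EReal.coe_le_coe_iff.2 (csSup_le (hS.image _) ?_))
    rintro _ ⟨P, hP, rfl⟩
    exact ha P hP
end
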